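/- arXiv:1706.04094 — 3 statements merged into one kernel-verified Lean document; each statement's English description precedes it below -/
import Mathlib

section
/- (Tanaka inequality.) Let A > 0 and let ñ, m̃ be probability measures on ℝ with finite second moments such that ∫ y dñ(y) = ∫ y dm̃(y). Then W₂(T(ñ), T(m̃)) ≤ (1/√2) · W₂(ñ, m̃). -/
open MeasureTheory Real
open scoped ENNReal

noncomputable section

/-- Gaussian density `Γ_v(y) = (2πv)^{-1/2} exp(-y²/(2v))`. -/
def gaussianD (v y : ℝ) : ℝ := (2 * π * v) ^ (-(1:ℝ)/2) * Real.exp (-(y ^ 2) / (2 * v))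

/-- Couplings (transference plans) between two measures on `ℝ`. -/
def Couplings (μ ν : Measure ℝ) : Set (Measure (ℝ × ℝ)) :=
  {plan | IsProbabilityMeasure plan ∧ plan.map Prod.fst = μ ∧ plan.map Prod.snd = ν}

/-- Wasserstein distance `W_p` (valued in `ℝ≥0∞`). -/
def Wass (p : ℝ) (μ ν : Measure ℝ) : ℝ≥0∞ :=
  ⨅ plan ∈ Couplings μ ν, (∫⁻ q : ℝ × ℝ, ENNReal.ofReal (|q.1 - q.2| ^ p) ∂plan) ^ (1/p)

/-- The measure on `ℝ` with density `f` with respect to Lebesgue measure. -/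
def densToMeasure (f : ℝ → ℝ) : Measure ℝ :=
  volume.withDensity fun y => ENNReal.ofReal (f y)

/-- The infinitesimal operator `T` on probability measures: `T(ñ)` is the measure with
Lebesgue density `y ↦ ∫∫ Γ_{A/2}(y - (y₊+y₊')/2) dñ(y₊) dñ(y₊')`. -/
def Tmeas (A : ℝ) (μ : Measure ℝ) : Measure ℝ :=
  volume.withDensity fun y =>
    ∫⁻ p : ℝ × ℝ, ENNReal.ofReal (gaussianD (A/2) (y - (p.1 + p.2)/2)) ∂(μ.prod μ)

/-- The density of the infinitesimal operator applied to a probability measure: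
`T(ñ)(y) = ∫∫ Γ_{A/2}(y - (y₊+y₊')/2) dñ(y₊) dñ(y₊')`. -/
def Tfun (A : ℝ) (μ : Measure ℝ) (y : ℝ) : ℝ :=
  ∫ p : ℝ × ℝ, gaussianD (A/2) (y - (p.1 + p.2)/2) ∂(μ.prod μ)

end

/-!
Given a coupling `γ` of `μ` and `ν`, draw `Z ~ N(0, A/2)` and two independent pairs
`(X, Y), (X', Y')` with law `γ`. Then `Z + (X + X')/2` has law `T(μ)` and `Z + (Y + Y')/2` has
law `T(ν)`, so these form a coupling of `T(μ)` and `T(ν)`. The shared noise `Z` cancels in its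
cost, which is `E[((D + D')/2)²] = (E[D²] + E[D]²)/2` for the i.i.d. differences `D = X - Y`,
`D' = X' - Y'`; equal means give `E[D] = 0`, so the cost is half that of `γ`.
-/

open ProbabilityTheory
open scoped NNReal

section SecondMoment

variable {α : Type*} [MeasurableSpace α] {ρ : Measure α} {f : α → ℝ}

lemma integrable_sq_of_lintegral_lt_top (hf : AEStronglyMeasurable f ρ)
    (h : ∫⁻ a, ENNReal.ofReal (f a ^ 2) ∂ρ < ⊤) : Integrable (fun a => f a ^ 2) ρ :=
  ⟨hf.pow 2, (hasFiniteIntegral_iff_ofReal (ae_of_all _ fun _ => sq_nonneg _)).2 h⟩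

lemma integrable_of_lintegral_sq_lt_top [IsFiniteMeasure ρ] (hf : AEStronglyMeasurable f ρ)
    (h : ∫⁻ a, ENNReal.ofReal (f a ^ 2) ∂ρ < ⊤) : Integrable f ρ :=
  ((memLp_two_iff_integrable_sq hf).2 (integrable_sq_of_lintegral_lt_top hf h)).integrable
    one_le_two

lemma integral_prod_half_add_sq [IsProbabilityMeasure ρ] (hf : MemLp f 2 ρ) :
    ∫ w, ((f w.1 + f w.2) / 2) ^ 2 ∂(ρ.prod ρ)
      = ((∫ a, f a ^ 2 ∂ρ) + (∫ a, f a ∂ρ) ^ 2) / 2 := by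
  have hf1 : Integrable f ρ := hf.integrable one_le_two
  have hf2 : Integrable (fun a => f a ^ 2) ρ := hf.integrable_sq
  have hsq₁ : Integrable (fun w : α × α => f w.1 ^ 2 / 4) (ρ.prod ρ) :=
    (hf2.div_const 4).comp_fst ρ
  have hsq₂ : Integrable (fun w : α × α => f w.2 ^ 2 / 4) (ρ.prod ρ) :=
    (hf2.div_const 4).comp_snd ρ
  have hcross : Integrable (fun w : α × α => f w.1 / 2 * f w.2) (ρ.prod ρ) :=
    (hf1.div_const 2).mul_prod hf1
  calc ∫ w, ((f w.1 + f w.2) / 2) ^ 2 ∂(ρ.prod ρ)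
      = ∫ w, (f w.1 ^ 2 / 4 + f w.2 ^ 2 / 4 + f w.1 / 2 * f w.2) ∂(ρ.prod ρ) := by
        congr 1 with w; ring
    _ = (∫ a, f a ^ 2 / 4 ∂ρ) + (∫ a, f a ^ 2 / 4 ∂ρ)
          + (∫ a, f a / 2 ∂ρ) * ∫ a, f a ∂ρ := by
        rw [integral_add (f := fun w : α × α => f w.1 ^ 2 / 4 + f w.2 ^ 2 / 4)
          (hsq₁.add hsq₂) hcross, integral_add hsq₁ hsq₂,
          integral_fun_fst (fun a => f a ^ 2 / 4), integral_fun_snd (fun a => f a ^ 2 / 4),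
          integral_prod_mul (fun a => f a / 2) f]
        simp only [probReal_univ, smul_eq_mul, one_mul]
    _ = ((∫ a, f a ^ 2 ∂ρ) + (∫ a, f a ∂ρ) ^ 2) / 2 := by
        rw [integral_div, integral_div]; ring

lemma lintegral_prod_half_add_sq_le [IsProbabilityMeasure ρ] (hf : Integrable f ρ)
    (hf0 : ∫ a, f a ∂ρ = 0) :
    ∫⁻ w, ENNReal.ofReal (((f w.1 + f w.2) / 2) ^ 2) ∂(ρ.prod ρ)
      ≤ (∫⁻ a, ENNReal.ofReal (f a ^ 2) ∂ρ) / 2 := by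
  by_cases htop : ∫⁻ a, ENNReal.ofReal (f a ^ 2) ∂ρ = ⊤
  · simp [htop, ENNReal.top_div_of_ne_top]
  have hf2 : Integrable (fun a => f a ^ 2) ρ :=
    integrable_sq_of_lintegral_lt_top hf.1 (lt_top_iff_ne_top.2 htop)
  have hL2 : MemLp f 2 ρ := (memLp_two_iff_integrable_sq hf.1).2 hf2
  have hprod : Integrable (fun w : α × α => ((f w.1 + f w.2) / 2) ^ 2) (ρ.prod ρ) := by
    convert (((hL2.comp_fst ρ).add (hL2.comp_snd ρ)).const_mul (1 / 2 : ℝ)).integrable_sq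
      using 2 with w
    simp only [Pi.add_apply]
    ring
  rw [← ofReal_integral_eq_lintegral_ofReal hprod (ae_of_all _ fun _ => sq_nonneg _),
    ← ofReal_integral_eq_lintegral_ofReal hf2 (ae_of_all _ fun _ => sq_nonneg _),
    integral_prod_half_add_sq hL2, hf0, ENNReal.ofReal_div_of_pos two_pos]
  simp

end SecondMoment

lemma ofReal_gaussianD_sub {v : ℝ} (hv : 0 < v) (m y : ℝ) :
    ENNReal.ofReal (gaussianD v (y - m)) = gaussianPDF m v.toNNReal y := by
  rw [gaussianPDF, gaussianPDFReal, gaussianD, Real.coe_toNNReal _ hv.le,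
    show (-(1:ℝ)/2) = -(1/2) by ring, Real.rpow_neg (by positivity), ← Real.sqrt_eq_rpow]

@[fun_prop]
lemma measurable_gaussianD (v : ℝ) : Measurable (gaussianD v) := by
  unfold gaussianD
  fun_prop

lemma map_gaussianReal_prod_add {α : Type*} [MeasurableSpace α] {v : ℝ} (hv : 0 < v)
    (ρ : Measure α) [SFinite ρ] {c : α → ℝ} (hc : Measurable c) :
    ((gaussianReal 0 v.toNNReal).prod ρ).map (fun q => q.1 + c q.2)
      = volume.withDensity fun y => ∫⁻ a, ENNReal.ofReal (gaussianD v (y - c a)) ∂ρ := by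
  have hv' : v.toNNReal ≠ 0 := by simpa using hv
  set φ : ℝ × α → ℝ := fun q => q.1 + c q.2
  have hmeas : Measurable φ := by fun_prop
  ext s hs
  rw [Measure.map_apply hmeas hs, Measure.prod_apply_symm (hmeas hs), withDensity_apply _ hs,
    lintegral_lintegral_swap (by fun_prop)]
  refine lintegral_congr fun a => ?_
  have hfiber : gaussianReal 0 v.toNNReal ((fun z => (z, a)) ⁻¹' (φ ⁻¹' s))
      = gaussianReal (c a) v.toNNReal s := by
    rw [← zero_add (c a), ← gaussianReal_map_add_const, Measure.map_apply (by fun_prop) hs]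
    rfl
  simp_rw [hfiber, ofReal_gaussianD_sub hv, gaussianReal_of_var_ne_zero _ hv',
    withDensity_apply _ hs]

lemma Tmeas_eq_map {A : ℝ} (hA : 0 < A) (μ : Measure ℝ) [SFinite μ] :
    Tmeas A μ = ((gaussianReal 0 (A / 2).toNNReal).prod (μ.prod μ)).map
      fun q => q.1 + (q.2.1 + q.2.2) / 2 :=
  (map_gaussianReal_prod_add (half_pos hA) _ (by fun_prop)).symm

noncomputable def transportCost (p : ℝ) (γ : Measure (ℝ × ℝ)) : ℝ≥0∞ :=
  ∫⁻ q, ENNReal.ofReal (|q.1 - q.2| ^ p) ∂γ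

lemma Wass_le_of_forall_couplings {p : ℝ} (hp : 0 < p) {k : ℝ≥0∞} (hk₀ : k ≠ 0)
    (hk : k ≠ ⊤) {μ ν μ' ν' : Measure ℝ}
    (h : ∀ γ ∈ Couplings μ ν, ∃ γ' ∈ Couplings μ' ν',
      transportCost p γ' ≤ k * transportCost p γ) :
    Wass p μ' ν' ≤ k ^ (1 / p) * Wass p μ ν := by
  have hkp₀ : k ^ (1 / p) ≠ 0 := by positivity
  have hkp : k ^ (1 / p) ≠ ⊤ := ENNReal.rpow_ne_top_of_nonneg (by positivity) hk
  simp_rw [Wass, ENNReal.mul_iInf_of_ne hkp₀ hkp]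
  refine le_iInf₂ fun γ hγ => ?_
  obtain ⟨γ', hγ', hcost⟩ := h γ hγ
  calc ⨅ γ ∈ Couplings μ' ν', transportCost p γ ^ (1 / p)
      ≤ transportCost p γ' ^ (1 / p) := iInf₂_le γ' hγ'
    _ ≤ (k * transportCost p γ) ^ (1 / p) := ENNReal.rpow_le_rpow hcost (by positivity)
    _ = k ^ (1 / p) * transportCost p γ ^ (1 / p) := ENNReal.mul_rpow_of_nonneg _ _ (by positivity)

lemma transportCost_two (γ : Measure (ℝ × ℝ)) :
    transportCost 2 γ = ∫⁻ q, ENNReal.ofReal ((q.1 - q.2) ^ 2) ∂γ := by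
  simp_rw [transportCost, Real.rpow_two, sq_abs]

section Couplings

variable {μ ν : Measure ℝ} {γ : Measure (ℝ × ℝ)}

lemma integrable_of_map_eq {f : ℝ × ℝ → ℝ} (hf : Measurable f) (hγ : γ.map f = μ)
    (hμ : Integrable (fun x => x) μ) : Integrable f γ := by
  subst hγ
  exact (integrable_map_measure aestronglyMeasurable_id hf.aemeasurable).1 hμ

lemma integrable_fst_sub_snd_of_mem_couplings (hγ : γ ∈ Couplings μ ν)
    (hμ : Integrable (fun x => x) μ) (hν : Integrable (fun y => y) ν) :
    Integrable (fun q : ℝ × ℝ => q.1 - q.2) γ :=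
  (integrable_of_map_eq measurable_fst hγ.2.1 hμ).sub
    (integrable_of_map_eq measurable_snd hγ.2.2 hν)

lemma integral_fst_sub_snd_of_mem_couplings (hγ : γ ∈ Couplings μ ν)
    (hμ : Integrable (fun x => x) μ) (hν : Integrable (fun y => y) ν) :
    ∫ q, q.1 - q.2 ∂γ = ∫ x, x ∂μ - ∫ y, y ∂ν := by
  obtain ⟨-, hfst, hsnd⟩ := hγ
  rw [integral_sub (integrable_of_map_eq measurable_fst hfst hμ)
    (integrable_of_map_eq measurable_snd hsnd hν), ← hfst, ← hsnd,
    integral_map (f := fun x => x) measurable_fst.aemeasurable aestronglyMeasurable_id,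
    integral_map (f := fun y => y) measurable_snd.aemeasurable aestronglyMeasurable_id]

end Couplings

noncomputable def tanakaCoupling (v : ℝ≥0) (γ : Measure (ℝ × ℝ)) : Measure (ℝ × ℝ) :=
  ((gaussianReal 0 v).prod (γ.prod γ)).map
    fun z => (z.1 + (z.2.1.1 + z.2.2.1) / 2, z.1 + (z.2.1.2 + z.2.2.2) / 2)

lemma map_add_half_add_prod_map (v : ℝ≥0) (γ : Measure (ℝ × ℝ)) [SFinite γ]
    {g : ℝ × ℝ → ℝ} (hg : Measurable g) :
    ((gaussianReal 0 v).prod (γ.prod γ)).map (fun z => z.1 + (g z.2.1 + g z.2.2) / 2)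
      = ((gaussianReal 0 v).prod ((γ.map g).prod (γ.map g))).map
          fun q => q.1 + (q.2.1 + q.2.2) / 2 := by
  rw [Measure.map_prod_map _ _ hg hg, ← Measure.map_id (μ := gaussianReal 0 v),
    Measure.map_prod_map _ _ measurable_id (hg.prodMap hg),
    Measure.map_map (by fun_prop) (by fun_prop), Measure.map_id]
  rfl

lemma tanakaCoupling_mem_couplings {A : ℝ} (hA : 0 < A) {μ ν : Measure ℝ}
    [SFinite μ] [SFinite ν] {γ : Measure (ℝ × ℝ)} (hγ : γ ∈ Couplings μ ν) :
    tanakaCoupling (A / 2).toNNReal γ ∈ Couplings (Tmeas A μ) (Tmeas A ν) := by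
  obtain ⟨hprob, hfst, hsnd⟩ := hγ
  refine ⟨Measure.isProbabilityMeasure_map (by fun_prop), ?_, ?_⟩
  · rw [tanakaCoupling, Measure.map_map measurable_fst (by fun_prop), Tmeas_eq_map hA, ← hfst]
    exact map_add_half_add_prod_map _ γ measurable_fst
  · rw [tanakaCoupling, Measure.map_map measurable_snd (by fun_prop), Tmeas_eq_map hA, ← hsnd]
    exact map_add_half_add_prod_map _ γ measurable_snd

lemma transportCost_two_tanakaCoupling (v : ℝ≥0) (γ : Measure (ℝ × ℝ)) [SFinite γ] :
    transportCost 2 (tanakaCoupling v γ)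
      = ∫⁻ w, ENNReal.ofReal ((((w.1.1 - w.1.2) + (w.2.1 - w.2.2)) / 2) ^ 2)
          ∂(γ.prod γ) := by
  rw [transportCost_two, tanakaCoupling, lintegral_map (by fun_prop) (by fun_prop),
    lintegral_prod _ (by fun_prop)]
  have hshift : ∀ (x : ℝ) (w : (ℝ × ℝ) × ℝ × ℝ),
      x + (w.1.1 + w.2.1) / 2 - (x + (w.1.2 + w.2.2) / 2)
        = ((w.1.1 - w.1.2) + (w.2.1 - w.2.2)) / 2 :=
    fun _ _ => by ring
  simp_rw [hshift, lintegral_const, measure_univ, mul_one]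

/-- Theorem 4.1 (a Tanaka inequality): if `ñ` and `m̃` are probability measures on `ℝ` with
finite second moments and equal means, then `W₂(T(ñ), T(m̃)) ≤ W₂(ñ, m̃)/√2`. -/
theorem tanaka_inequality (A : ℝ) (hA : 0 < A) (μ ν : Measure ℝ)
    [IsProbabilityMeasure μ] [IsProbabilityMeasure ν]
    (hμ : (∫⁻ y : ℝ, ENNReal.ofReal (y ^ 2) ∂μ) < ⊤)
    (hν : (∫⁻ y : ℝ, ENNReal.ofReal (y ^ 2) ∂ν) < ⊤)
    (hmean : (∫ y, y ∂μ) = ∫ y, y ∂ν) :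
    Wass 2 (Tmeas A μ) (Tmeas A ν) ≤ ENNReal.ofReal (1 / Real.sqrt 2) * Wass 2 μ ν := by
  have hμ₁ := integrable_of_lintegral_sq_lt_top aestronglyMeasurable_id hμ
  have hν₁ := integrable_of_lintegral_sq_lt_top aestronglyMeasurable_id hν
  have hconst : ENNReal.ofReal (1 / Real.sqrt 2) = 2⁻¹ ^ (1 / (2 : ℝ)) := by
    rw [← ENNReal.ofReal_ofNat 2, ← ENNReal.ofReal_inv_of_pos two_pos,
      ENNReal.ofReal_rpow_of_nonneg (by norm_num) (by norm_num), ← Real.sqrt_eq_rpow,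
      Real.sqrt_inv, one_div]
  rw [hconst]
  refine Wass_le_of_forall_couplings two_pos (by simp) (by simp) fun γ hγ =>
    ⟨_, tanakaCoupling_mem_couplings hA hγ, ?_⟩
  have : IsProbabilityMeasure γ := hγ.1
  rw [transportCost_two_tanakaCoupling, mul_comm, ← div_eq_mul_inv, transportCost_two]
  exact lintegral_prod_half_add_sq_le (integrable_fst_sub_snd_of_mem_couplings hγ hμ₁ hν₁)
    (by rw [integral_fst_sub_snd_of_mem_couplings hγ hμ₁ hν₁, hmean, sub_self])
end

section
/- Let A > 0. For any Z ∈ ℝ, the Gaussian Γ_A(· − Z) is a fixed point of the infinitesimal operator T: for every y ∈ ℝ, T(Γ_A(· − Z))(y) = Γ_A(y − Z). -/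
open MeasureTheory Real
open scoped ENNReal

noncomputable section

/-- The infinitesimal operator acting on probability densities:
`T(ñ)(y) = ∫∫ Γ_{A/2}(y - (y₊+y₊')/2) ñ(y₊) ñ(y₊') dy₊ dy₊'`. -/
def TdensFn (A : ℝ) (f : ℝ → ℝ) (y : ℝ) : ℝ :=
  ∫ p : ℝ × ℝ, gaussianD (A/2) (y - (p.1 + p.2)/2) * f p.1 * f p.2

end

lemma rpow_neg_half {x : ℝ} (hx : 0 < x) : x ^ (-(1:ℝ)/2) = (Real.sqrt x)⁻¹ := by
  rw [Real.sqrt_eq_rpow, ← Real.rpow_neg hx.le]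
  norm_num

lemma gaussianD_eq {v : ℝ} (hv : 0 < v) (y : ℝ) :
    gaussianD v y = (Real.sqrt (2*π*v))⁻¹ * Real.exp (-(y^2)/(2*v)) := by
  rw [gaussianD, rpow_neg_half (by positivity)]

lemma gaussianD_nonneg {v : ℝ} (hv : 0 < v) (y : ℝ) : 0 ≤ gaussianD v y := by
  rw [gaussianD_eq hv]; positivity

lemma gaussianD_le {v : ℝ} (hv : 0 < v) (y : ℝ) :
    gaussianD v y ≤ (Real.sqrt (2*π*v))⁻¹ := by
  rw [gaussianD_eq hv]
  calc (Real.sqrt (2*π*v))⁻¹ * Real.exp (-(y^2)/(2*v))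
      ≤ (Real.sqrt (2*π*v))⁻¹ * 1 := by
        apply mul_le_mul_of_nonneg_left _ (by positivity)
        exact Real.exp_le_one_iff.2
          (div_nonpos_of_nonpos_of_nonneg (neg_nonpos.2 (sq_nonneg y)) (by positivity))
    _ = (Real.sqrt (2*π*v))⁻¹ := mul_one _

lemma continuous_gaussianD (v : ℝ) : Continuous (gaussianD v) := by
  unfold gaussianD
  fun_prop

lemma integrable_gaussianD {v : ℝ} (hv : 0 < v) (Z : ℝ) :
    Integrable (fun x => gaussianD v (x - Z)) := by
  unfold gaussianD
  apply Integrable.const_mul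
  have h : Integrable (fun x : ℝ => Real.exp (-(2*v)⁻¹ * x ^ 2)) :=
    integrable_exp_neg_mul_sq (by positivity)
  have := h.comp_sub_right Z
  refine this.congr (Filter.Eventually.of_forall fun x => ?_)
  simp only [Function.comp]
  congr 1
  field_simp

lemma gaussianD_scale {v c : ℝ} (hv : 0 < v) (hc : 0 < c) (x : ℝ) :
    gaussianD (c^2*v) (c*x) = c⁻¹ * gaussianD v x := by
  rw [gaussianD_eq (by positivity), gaussianD_eq hv]
  have h1 : Real.sqrt (2*π*(c^2*v)) = c * Real.sqrt (2*π*v) := by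
    rw [show 2*π*(c^2*v) = c^2 * (2*π*v) by ring, Real.sqrt_mul (sq_nonneg c),
      Real.sqrt_sq hc.le]
  have h2 : -((c*x)^2)/(2*(c^2*v)) = -(x^2)/(2*v) := by
    field_simp
  rw [h1, h2, mul_inv]; ring

lemma gaussianD_conv {v w : ℝ} (hv : 0 < v) (hw : 0 < w) (c Z : ℝ) :
    (∫ x : ℝ, gaussianD v (c - x) * gaussianD w (x - Z)) = gaussianD (v+w) (c - Z) := by
  have hπ := Real.pi_pos
  set k : ℝ := (v+w)/(2*v*w) with hk
  have hkpos : 0 < k := by positivity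
  set m : ℝ := (w*c + v*Z)/(v+w) with hm
  have key : ∀ x : ℝ, gaussianD v (c - x) * gaussianD w (x - Z)
      = ((Real.sqrt (2*π*v))⁻¹ * (Real.sqrt (2*π*w))⁻¹
          * Real.exp (-((c-Z)^2)/(2*(v+w)))) * Real.exp (-(k * (x - m)^2)) := by
    intro x
    have hexp : Real.exp (-((c-x)^2)/(2*v)) * Real.exp (-((x-Z)^2)/(2*w))
        = Real.exp (-((c-Z)^2)/(2*(v+w))) * Real.exp (-(k*(x-m)^2)) := by
      rw [← Real.exp_add, ← Real.exp_add]
      congr 1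
      rw [hk, hm]
      field_simp
      ring
    rw [gaussianD_eq hv, gaussianD_eq hw, mul_mul_mul_comm, hexp]
    ring
  simp_rw [key]
  rw [integral_const_mul]
  have hint : (∫ x : ℝ, Real.exp (-(k * (x - m)^2))) = Real.sqrt (π / k) := by
    have := integral_sub_right_eq_self (μ := volume) (fun x : ℝ => Real.exp (-(k * x^2))) m
    rw [this]
    simp_rw [neg_mul_eq_neg_mul]
    exact integral_gaussian k
  rw [hint, gaussianD_eq (by positivity)]
  have hconst : (Real.sqrt (2*π*v))⁻¹ * (Real.sqrt (2*π*w))⁻¹ * Real.sqrt (π / k)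
      = (Real.sqrt (2*π*(v+w)))⁻¹ := by
    rw [← Real.sqrt_inv, ← Real.sqrt_inv, ← Real.sqrt_mul (by positivity),
      ← Real.sqrt_mul (by positivity), ← Real.sqrt_inv]
    congr 1
    rw [hk]
    field_simp
  rw [← hconst]; ring

/-- Equation (4.4) of the paper: for any `Z ∈ ℝ`, the Gaussian `Γ_A(· - Z)` is a fixed point
of the infinitesimal operator `T`. -/
theorem gaussian_fixed_point_of_T (A : ℝ) (hA : 0 < A) (Z : ℝ) :
    ∀ y : ℝ, TdensFn A (fun w => gaussianD A (w - Z)) y = gaussianD A (y - Z) := by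
  intro y
  have hπ := Real.pi_pos
  unfold TdensFn
  rw [MeasureTheory.Measure.volume_eq_prod ℝ ℝ]
  -- integrability
  have hg := integrable_gaussianD hA Z
  have hF : Integrable (fun p : ℝ × ℝ =>
      gaussianD (A/2) (y - (p.1 + p.2)/2) * gaussianD A (p.1 - Z) * gaussianD A (p.2 - Z))
      ((volume : Measure ℝ).prod volume) := by
    have hdom : Integrable (fun p : ℝ × ℝ =>
        (Real.sqrt (2*π*(A/2)))⁻¹ * (gaussianD A (p.1 - Z) * gaussianD A (p.2 - Z)))
        ((volume : Measure ℝ).prod volume) := (hg.mul_prod hg).const_mul _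
    refine hdom.mono' ?_ (Filter.Eventually.of_forall fun p => ?_)
    · apply Continuous.aestronglyMeasurable
      exact (((continuous_gaussianD (A/2)).comp (by fun_prop)).mul
        ((continuous_gaussianD A).comp (by fun_prop))).mul
        ((continuous_gaussianD A).comp (by fun_prop))
    · have h1 := gaussianD_nonneg hA (p.1 - Z)
      have h2 := gaussianD_nonneg hA (p.2 - Z)
      have h0 := gaussianD_nonneg (by positivity : (0:ℝ) < A/2) (y - (p.1 + p.2)/2)
      rw [Real.norm_eq_abs, abs_of_nonneg (by positivity)]
      have hb := gaussianD_le (by positivity : (0:ℝ) < A/2) (y - (p.1 + p.2)/2)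
      calc gaussianD (A/2) (y - (p.1 + p.2)/2) * gaussianD A (p.1 - Z) * gaussianD A (p.2 - Z)
          ≤ (Real.sqrt (2*π*(A/2)))⁻¹ * gaussianD A (p.1 - Z) * gaussianD A (p.2 - Z) := by
            apply mul_le_mul_of_nonneg_right _ h2
            exact mul_le_mul_of_nonneg_right hb h1
        _ = (Real.sqrt (2*π*(A/2)))⁻¹ * (gaussianD A (p.1 - Z) * gaussianD A (p.2 - Z)) := by
            ring
  rw [MeasureTheory.integral_prod _ hF]
  -- pointwise rewrite of the integrand
  have key : ∀ a b : ℝ, gaussianD (A/2) (y - (a + b)/2) * gaussianD A (a - Z) * gaussianD A (b - Z)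
      = gaussianD A (a - Z) * (2 * (gaussianD (2*A) ((2*y - a) - b) * gaussianD A (b - Z))) := by
    intro a b
    have hs := gaussianD_scale (v := 2*A) (c := (1:ℝ)/2) (by positivity) (by norm_num)
      (2*y - a - b)
    have h1 : ((1:ℝ)/2)^2 * (2*A) = A/2 := by ring
    have h2 : (1:ℝ)/2 * (2*y - a - b) = y - (a + b)/2 := by ring
    rw [h1, h2] at hs
    rw [hs]
    norm_num
    ring
  simp_rw [key, integral_const_mul, gaussianD_conv (v := 2*A) (w := A) (by positivity) hA]
  have key2 : ∀ a : ℝ, gaussianD A (a - Z) * (2 * gaussianD (2*A + A) (2*y - a - Z))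
      = 2 * (gaussianD (2*A + A) ((2*y - Z) - a) * gaussianD A (a - Z)) := by
    intro a
    have : 2*y - a - Z = (2*y - Z) - a := by ring
    rw [this]; ring
  simp_rw [key2, integral_const_mul,
    gaussianD_conv (v := 2*A + A) (w := A) (by positivity) hA]
  have hs := gaussianD_scale (v := A) (c := (2:ℝ)) hA (by norm_num) (y - Z)
  have h1 : (2:ℝ)^2 * A = 2*A + A + A := by ring
  have h2 : (2:ℝ) * (y - Z) = 2*y - Z - Z := by ring
  rw [h1, h2] at hs
  rw [hs]
  ring
end

section
/- (Stability of the KBM under the perturbations of Theorem 2.1.) Let d ≥ 1, A > 0, θ ∈ (0,1), τ > 0, γ > 0, and let y_opt satisfy ‖y_opt‖_{W^{1,∞}(ℝ₊ × 𝕋^d)} < ∞. Let (N,Z) ∈ C^θ([0,τ) × 𝕋^d) satisfy the perturbed system ∂_t N − Δ_x N = [1 − (1/2)(Z − y_opt)² − N + φ_N] N, ∂_t Z − Δ_x Z = 2(∇_x N · ∇_x Z)/N − A(Z − y_opt) + φ_Z, with ‖φ_N(t,·)‖_{L^∞(𝕋^d)} + ‖φ_Z(t,·)‖_{L^∞(𝕋^d)}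 ≤ C₀/γ^θ + C₀·1_{[0,1/γ^θ]}(t) for some C₀ > 0, and let (N̄,Z̄) ∈ C^θ([0,τ) × 𝕋^d) solve the KBM, with (N(0,·),Z(0,·)) = (N̄(0,·),Z̄(0,·)) = (N⁰,Z⁰) where N⁰, Z⁰ ∈ W^{2,∞}(𝕋^d) and min_{𝕋^d} N⁰ > 0; assume N, N̄, Z, Z̄ are bounded and N, N̄ are bounded away from 0 on [0,τ) × 𝕋^d. Then there exists a constant C > 0 (independent of γ) such that for all t ∈ [0,τ), ‖(N − N̄)(t,·)‖_{L^∞(𝕋^d)} + ‖(NZ − N̄Z̄)(t,·)‖_{L^∞(𝕋^d)} ≤ (C/γ^θ) e^{Ct}. In particular, N → N̄ and Z → Z̄ in L^∞_loc(ℝ₊, L^∞(𝕋^d)) as γ → ∞. -/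
open MeasureTheory Real Set
open scoped ENNReal

noncomputable section

/-- Euclidean space `ℝ^d`. Periodic functions on it represent functions on the torus `𝕋^d`. -/
abbrev Eucl (d : ℕ) := EuclideanSpace ℝ (Fin d)

/-- `ℤ^d`-periodicity: `f` represents a function on the torus `𝕋^d`. -/
def PeriodicFn {d : ℕ} (f : Eucl d → ℝ) : Prop :=
  ∀ (x : Eucl d) (k : Fin d → ℤ),
    f (x + ∑ i, (k i : ℝ) • EuclideanSpace.single i (1 : ℝ)) = f x

/-- Laplacian `Δ_x f` in the space variable. -/
def lapl {d : ℕ} (f : Eucl d → ℝ) (x : Eucl d) : ℝ :=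
  ∑ i, fderiv ℝ (fun z => fderiv ℝ f z (EuclideanSpace.single i (1:ℝ))) x
      (EuclideanSpace.single i (1:ℝ))

/-- Dot product of gradients, `∇_x f · ∇_x g`. -/
def gradDot {d : ℕ} (f g : Eucl d → ℝ) (x : Eucl d) : ℝ :=
  ∑ i, fderiv ℝ f x (EuclideanSpace.single i (1:ℝ)) *
    fderiv ℝ g x (EuclideanSpace.single i (1:ℝ))

/-- Population size `N(t,x) = ∫ n(t,x,y) dy`. -/
def Npop {d : ℕ} (n : ℝ → Eucl d → ℝ → ℝ) (t : ℝ) (x : Eucl d) : ℝ := ∫ y, n t x y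

/-- Mean phenotypic trait `Z(t,x) = ∫ y n(t,x,y) dy / N(t,x)`. -/
def Zmean {d : ℕ} (n : ℝ → Eucl d → ℝ → ℝ) (t : ℝ) (x : Eucl d) : ℝ :=
  (∫ y, y * n t x y) / Npop n t x

/-- Reproduction (infinitesimal) operator applied to `f = n(t,x,·)` (not yet normalized):
`∫∫ Γ_{A/2}(y - (y₊+y₊')/2) f(y₊) f(y₊') dy₊ dy₊'`. -/
def reproT (A : ℝ) (f : ℝ → ℝ) (y : ℝ) : ℝ :=
  ∫ p : ℝ × ℝ, gaussianD (A/2) (y - (p.1 + p.2)/2) * f p.1 * f p.2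

/-- Right-hand side of the SIM equation. -/
def simRHS {d : ℕ} (A γ : ℝ) (yopt : ℝ → Eucl d → ℝ) (n : ℝ → Eucl d → ℝ → ℝ)
    (t : ℝ) (x : Eucl d) (y : ℝ) : ℝ :=
  lapl (fun z => n t z y) x
    + (1 + A/2 - (1/2) * (y - yopt t x)^2 - Npop n t x) * n t x y
    + γ * (reproT A (n t x) y / Npop n t x - n t x y)

/-- Membership of a time `t` in `[0, τ)`, where `τ ∈ (0, ∞]`. -/
def InDom (τ : ℝ≥0∞) (t : ℝ) : Prop := 0 ≤ t ∧ ENNReal.ofReal t < τ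

/-- A (classical, pointwise) solution of the SIM on `[0,τ) × 𝕋^d × ℝ` with initial datum `n0`,
lying in `L^∞([0,τ) × 𝕋^d, L¹((1+|y|⁴)dy))`. -/
structure IsSIMSol {d : ℕ} (A γ : ℝ) (yopt : ℝ → Eucl d → ℝ) (n0 : Eucl d → ℝ → ℝ)
    (τ : ℝ≥0∞) (n : ℝ → Eucl d → ℝ → ℝ) : Prop where
  init : ∀ x y, n 0 x y = n0 x y
  nonneg : ∀ t x y, InDom τ t → 0 ≤ n t x y
  periodic : ∀ t y, InDom τ t → PeriodicFn fun x => n t x y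
  integ : ∀ t x, InDom τ t → Integrable fun y => (1 + y^4) * n t x y
  bddL1 : ∃ M : ℝ, ∀ t x, InDom τ t → (∫ y, (1 + y^4) * n t x y) ≤ M
  posMass : ∀ t x, InDom τ t → 0 < Npop n t x
  pde : ∀ t x y, InDom τ t → HasDerivAt (fun s => n s x y) (simRHS A γ yopt n t x y) t

/-- `f ∈ W^{2,∞}`: `f`, its derivative and second derivative are (globally) bounded. -/
def BddW2inf {d : ℕ} (f : Eucl d → ℝ) : Prop :=
  ∃ M : ℝ, ∀ x, |f x| + ‖fderiv ℝ f x‖ + ‖fderiv ℝ (fderiv ℝ f) x‖ ≤ M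

/-- Assumption 1 of the paper, on the optimal trait `y_opt` and the initial datum `n⁰`. -/
structure Assumption1 {d : ℕ} (yopt : ℝ → Eucl d → ℝ) (n0 : Eucl d → ℝ → ℝ) : Prop where
  yopt_cd : ContDiff ℝ 1 (fun p : ℝ × Eucl d => yopt p.1 p.2)
  yopt_per : ∀ t, PeriodicFn (yopt t)
  yopt_bdd : ∃ M : ℝ, ∀ (t : ℝ) (x : Eucl d), 0 ≤ t →
    |yopt t x| + ‖fderiv ℝ (fun p : ℝ × Eucl d => yopt p.1 p.2) (t, x)‖ ≤ M
  n0_nonneg : ∀ x y, 0 ≤ n0 x y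
  n0_per : ∀ y, PeriodicFn fun x => n0 x y
  n0_integ : ∀ x, Integrable fun y => (1 + y^4) * n0 x y
  n0_moment : ∃ M : ℝ, ∀ x, (∫ y, (1 + y^4) * n0 x y) / (∫ y, n0 x y) ≤ M
  n0_mass_pos : ∃ ε > (0:ℝ), ∀ x, ε ≤ ∫ y, n0 x y
  n0_N_W2 : BddW2inf fun x => ∫ y, n0 x y
  n0_Z_W2 : BddW2inf fun x => (∫ y, y * n0 x y) / (∫ y, n0 x y)

/-- `‖Z(0,·)‖_{L^∞(𝕋^d)}` computed from the initial datum. -/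
def supZ0 {d : ℕ} (n0 : Eucl d → ℝ → ℝ) : ℝ :=
  ⨆ x : Eucl d, |(∫ y, y * n0 x y) / (∫ y, n0 x y)|

/-- `‖y_opt‖_{L^∞(ℝ₊ × 𝕋^d)}`. -/
def supYopt {d : ℕ} (yopt : ℝ → Eucl d → ℝ) : ℝ :=
  ⨆ t : Ici (0:ℝ), ⨆ x : Eucl d, |yopt t x|

end

noncomputable section

/-- `θ`-Hölder continuity (jointly in time and space) on `[0,τ) × 𝕋^d`. -/
def HolderOn {d : ℕ} (θ τ : ℝ) (f : ℝ → Eucl d → ℝ) : Prop :=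
  ∃ C : ℝ, ∀ (s t : ℝ) (x y : Eucl d), 0 ≤ s → s < τ → 0 ≤ t → t < τ →
    |f t x - f s y| ≤ C * (|t - s| + ‖x - y‖) ^ θ

/-- The Kirkpatrick-Barton system, with perturbations `φN`, `φZ`, pointwise on `[0,τ) × 𝕋^d`
(the unperturbed KBM corresponds to `φN = φZ = 0`). -/
def KBMsystem {d : ℕ} (A : ℝ) (yopt φN φZ N Z : ℝ → Eucl d → ℝ) (τ : ℝ) : Prop :=
  ∀ (t : ℝ) (x : Eucl d), 0 ≤ t → t < τ →
    HasDerivAt (fun s => N s x)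
      (lapl (N t) x + (1 - (1/2) * (Z t x - yopt t x) ^ 2 - N t x + φN t x) * N t x) t ∧
    HasDerivAt (fun s => Z s x)
      (lapl (Z t) x + 2 * gradDot (N t) (Z t) x / N t x - A * (Z t x - yopt t x) + φZ t x) t

end

/-!
In the variables `u = N - N̄` and `v = N Z - N̄ Z̄` the transport term `2 ∇N·∇Z / N` disappears:
`∂ₜ(NZ) - Δ(NZ)` contains no gradient. So `u` and `v` solve heat equations whose sources are
Lipschitz in `(u, v)`, with a constant depending only on `M`, `ε`, `A` and `‖y_opt‖_∞`, up to the
perturbations `φ_N`, `φ_Z`. A maximum principle for `|u| + |v|` on the torus, tested at the first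
time it touches a barrier `g` with `g' > K g + K (C₀ γ^{-θ} + C₀ 1_{[0, γ^{-θ}]})`, bounds it by
`g = O(γ^{-θ} e^{C t})`; the initial layer is absorbed by a mode `e^{-γ^θ t}`.
-/

open Filter Topology

section Laplacian

variable {d : ℕ} {f g : Eucl d → ℝ}

lemma differentiable_fderiv_apply (hf : ContDiff ℝ 2 f) (v : Eucl d) :
    Differentiable ℝ fun z => fderiv ℝ f z v :=
  ((hf.fderiv_right (by norm_num)).clm_apply contDiff_const).differentiable one_ne_zero

lemma lapl_add (hf : ContDiff ℝ 2 f) (hg : ContDiff ℝ 2 g) (x : Eucl d) :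
    lapl (fun z => f z + g z) x = lapl f x + lapl g x := by
  have hf1 := hf.differentiable (by norm_num)
  have hg1 := hg.differentiable (by norm_num)
  simp only [lapl, ← Finset.sum_add_distrib]
  refine Finset.sum_congr rfl fun i _ => ?_
  set e := EuclideanSpace.single i (1 : ℝ)
  have hfun : (fun z => fderiv ℝ (fun z => f z + g z) z e) =
      fun z => fderiv ℝ f z e + fderiv ℝ g z e := by
    funext z; rw [fderiv_fun_add (hf1 z) (hg1 z)]; rfl
  rw [hfun, fderiv_fun_add (differentiable_fderiv_apply hf e x)
    (differentiable_fderiv_apply hg e x)]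
  rfl

lemma lapl_const_mul (hf : ContDiff ℝ 2 f) (a : ℝ) (x : Eucl d) :
    lapl (fun z => a * f z) x = a * lapl f x := by
  have hf1 := hf.differentiable (by norm_num)
  simp only [lapl, Finset.mul_sum]
  refine Finset.sum_congr rfl fun i _ => ?_
  set e := EuclideanSpace.single i (1 : ℝ)
  have hfun : (fun z => fderiv ℝ (fun z => a * f z) z e) = fun z => a * fderiv ℝ f z e := by
    funext z; rw [fderiv_const_mul (hf1 z)]; rfl
  rw [hfun, fderiv_const_mul (differentiable_fderiv_apply hf e x)]
  rfl

lemma lapl_sub (hf : ContDiff ℝ 2 f) (hg : ContDiff ℝ 2 g) (x : Eucl d) :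
    lapl (fun z => f z - g z) x = lapl f x - lapl g x := by
  have hfun : (fun z => f z - g z) = fun z => f z + -1 * g z := by
    funext z; ring
  rw [hfun, lapl_add hf (contDiff_const.mul hg), lapl_const_mul hg]
  ring

lemma lapl_mul (hf : ContDiff ℝ 2 f) (hg : ContDiff ℝ 2 g) (x : Eucl d) :
    lapl (fun z => f z * g z) x = f x * lapl g x + g x * lapl f x + 2 * gradDot f g x := by
  have hf1 := hf.differentiable (by norm_num)
  have hg1 := hg.differentiable (by norm_num)
  simp only [lapl, gradDot, Finset.mul_sum, ← Finset.sum_add_distrib]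
  refine Finset.sum_congr rfl fun i _ => ?_
  set e := EuclideanSpace.single i (1 : ℝ)
  have hfun : (fun z => fderiv ℝ (fun z => f z * g z) z e) =
      fun z => f z * fderiv ℝ g z e + g z * fderiv ℝ f z e := by
    funext z; rw [fderiv_fun_mul (hf1 z) (hg1 z)]; simp
  have hf' := differentiable_fderiv_apply hf e x
  have hg' := differentiable_fderiv_apply hg e x
  rw [hfun, fderiv_fun_add ((hf1 x).fun_mul hg') ((hg1 x).fun_mul hf'),
    fderiv_fun_mul (hf1 x) hg', fderiv_fun_mul (hg1 x) hf']
  simp only [add_apply, smul_apply, smul_eq_mul]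
  ring

end Laplacian

section Extrema

lemma IsLocalMax.deriv_deriv_nonpos {φ : ℝ → ℝ} {a : ℝ} (hmax : IsLocalMax φ a)
    (hc : ContinuousAt φ a) : deriv (deriv φ) a ≤ 0 := by
  by_contra! hpos
  have hmin : IsLocalMin φ a := isLocalMin_of_deriv_deriv_pos hpos hmax.deriv_eq_zero hc
  have hconst : φ =ᶠ[𝓝 a] fun _ => φ a := by
    filter_upwards [hmax, hmin] with s h₁ h₂ using le_antisymm h₁ h₂
  have hderiv : deriv φ =ᶠ[𝓝 a] fun _ => 0 := by
    filter_upwards [hconst.eventuallyEq_nhds] with s hs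
    rw [hs.deriv_eq, deriv_const]
  rw [hderiv.deriv_eq, deriv_const] at hpos
  exact lt_irrefl 0 hpos

lemma lapl_nonpos_of_forall_le {d : ℕ} {f : Eucl d → ℝ} (hf : ContDiff ℝ 2 f) {x₀ : Eucl d}
    (hmax : ∀ x, f x ≤ f x₀) : lapl f x₀ ≤ 0 := by
  refine Finset.sum_nonpos fun i _ => ?_
  set e := EuclideanSpace.single i (1 : ℝ)
  set line : ℝ → Eucl d := fun s => x₀ + s • e
  have hline : ∀ s, HasDerivAt line e s := fun s => by
    simpa [line] using ((hasDerivAt_id s).smul_const e).const_add x₀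
  have hfirst : deriv (f ∘ line) = fun s => fderiv ℝ f (line s) e := funext fun s =>
    ((hf.differentiable (by norm_num) _).hasFDerivAt.comp_hasDerivAt s (hline s)).deriv
  have hsecond : deriv (deriv (f ∘ line)) 0 = fderiv ℝ (fun z => fderiv ℝ f z e) x₀ e := by
    rw [hfirst]
    exact ((differentiable_fderiv_apply hf e x₀).hasFDerivAt.comp_hasDerivAt_of_eq 0 (hline 0)
      (by simp [line])).deriv
  rw [← hsecond]
  refine IsLocalMax.deriv_deriv_nonpos (Eventually.of_forall fun s => ?_) ?_
  · simpa [line] using hmax (line s)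
  · exact (hf.continuous.comp (by fun_prop : Continuous line)).continuousAt

lemma IsMaxOn.hasDerivAt_nonneg_of_Icc {f : ℝ → ℝ} {f' a b : ℝ} (hab : a < b)
    (hmax : IsMaxOn f (Icc a b) b) (hf : HasDerivAt f f' b) : 0 ≤ f' := by
  have hcone : a - b ∈ posTangentConeAt (Icc a b) b :=
    sub_mem_posTangentConeAt_of_segment_subset (by rw [segment_symm, segment_eq_Icc hab.le])
  have := hmax.localize.hasFDerivWithinAt_nonpos hf.hasFDerivAt.hasFDerivWithinAt hcone
  simp only [ContinuousLinearMap.toSpanSingleton_apply, smul_eq_mul] at this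
  nlinarith

end Extrema

section Periodic

variable {d : ℕ} {f g : Eucl d → ℝ}

lemma PeriodicFn.comp₂ (hf : PeriodicFn f) (hg : PeriodicFn g) (F : ℝ → ℝ → ℝ) :
    PeriodicFn fun x => F (f x) (g x) := fun x k => by
  simp only [hf x k, hg x k]

lemma PeriodicFn.exists_forall_le (hf : PeriodicFn f) (hc : Continuous f) :
    ∃ x₀, ∀ x, f x ≤ f x₀ := by
  let toEucl : (Fin d → ℝ) → Eucl d := fun c => ∑ i, c i • EuclideanSpace.single i (1 : ℝ)
  have hcube : IsCompact (toEucl '' univ.pi fun _ => Icc 0 1) :=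
    (isCompact_univ_pi fun _ => isCompact_Icc).image (by fun_prop)
  obtain ⟨x₀, -, hx₀⟩ := hcube.exists_isMaxOn (Nonempty.image _ (univ_pi_nonempty_iff.2
    fun _ => nonempty_Icc.2 zero_le_one)) hc.continuousOn
  refine ⟨x₀, fun x => ?_⟩
  have hx : x = toEucl (fun i => Int.fract (x i))
      + ∑ i, ((⌊x i⌋ : ℤ) : ℝ) • EuclideanSpace.single i (1 : ℝ) := by
    simp only [toEucl, ← Finset.sum_add_distrib, ← add_smul, Int.fract_add_floor]
    simpa using ((EuclideanSpace.basisFun (Fin d) ℝ).sum_repr x).symm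
  rw [hx, hf]
  exact hx₀ (mem_image_of_mem _ fun i _ => ⟨Int.fract_nonneg _, (Int.fract_lt_one _).le⟩)

end Periodic

section Holder

variable {d : ℕ} {θ τ : ℝ} {f g : ℝ → Eucl d → ℝ}

lemma HolderOn.sub (hf : HolderOn θ τ f) (hg : HolderOn θ τ g) :
    HolderOn θ τ fun t x => f t x - g t x := by
  obtain ⟨Cf, hCf⟩ := hf
  obtain ⟨Cg, hCg⟩ := hg
  refine ⟨Cf + Cg, fun s t x y hs hsτ ht htτ => ?_⟩
  calc |f t x - g t x - (f s y - g s y)| ≤ |f t x - f s y| + |g t x - g s y| := by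
        rw [show f t x - g t x - (f s y - g s y) = (f t x - f s y) - (g t x - g s y) by ring]
        exact abs_sub _ _
    _ ≤ (Cf + Cg) * (|t - s| + ‖x - y‖) ^ θ := by
        linarith [hCf s t x y hs hsτ ht htτ, hCg s t x y hs hsτ ht htτ]

lemma HolderOn.mul {M : ℝ} (hf : HolderOn θ τ f) (hg : HolderOn θ τ g)
    (hfM : ∀ t x, 0 ≤ t → t < τ → |f t x| ≤ M) (hgM : ∀ t x, 0 ≤ t → t < τ → |g t x| ≤ M) :
    HolderOn θ τ fun t x => f t x * g t x := by
  obtain ⟨Cf, hCf⟩ := hf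
  obtain ⟨Cg, hCg⟩ := hg
  refine ⟨M * Cg + M * Cf, fun s t x y hs hsτ ht htτ => ?_⟩
  have hM : 0 ≤ M := (abs_nonneg _).trans (hfM t x ht htτ)
  calc |f t x * g t x - f s y * g s y|
        = |f t x * (g t x - g s y) + g s y * (f t x - f s y)| := by congr 1; ring
    _ ≤ |f t x| * |g t x - g s y| + |g s y| * |f t x - f s y| := by
        rw [← abs_mul, ← abs_mul]; exact abs_add_le _ _
    _ ≤ M * (Cg * (|t - s| + ‖x - y‖) ^ θ) + M * (Cf * (|t - s| + ‖x - y‖) ^ θ) := by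
        gcongr
        exacts [hfM t x ht htτ, hCg s t x y hs hsτ ht htτ, hgM s y hs hsτ,
          hCf s t x y hs hsτ ht htτ]
    _ = (M * Cg + M * Cf) * (|t - s| + ‖x - y‖) ^ θ := by ring

lemma HolderOn.abs_sub_le_time (hf : HolderOn θ τ f) :
    ∃ L, ∀ s t x, 0 ≤ s → s < τ → 0 ≤ t → t < τ → |f t x - f s x| ≤ L * |t - s| ^ θ := by
  obtain ⟨C, hC⟩ := hf
  exact ⟨C, fun s t x hs hsτ ht htτ => by simpa using hC s t x x hs hsτ ht htτ⟩

end Holder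

section FirstTouch

lemma exists_first_crossing {m g : ℝ → ℝ} {a b : ℝ} (hab : a ≤ b)
    (hm : ContinuousOn m (Icc a b)) (hg : ContinuousOn g (Icc a b))
    (ha : m a < g a) (hb : g b ≤ m b) :
    ∃ c ∈ Ioc a b, m c = g c ∧ ∀ s ∈ Ico a c, m s < g s := by
  set S := {t ∈ Icc a b | g t ≤ m t}
  have hbdd : BddBelow S := ⟨a, fun t ht => ht.1.1⟩
  obtain ⟨⟨hac, hcb⟩, hgm⟩ : sInf S ∈ S :=
    (isClosed_Icc.isClosed_le hg hm).csInf_mem ⟨b, ⟨hab, le_rfl⟩, hb⟩ hbdd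
  have hsub : Icc a (sInf S) ⊆ Icc a b := Icc_subset_Icc_right hcb
  obtain ⟨s, hs, hs0⟩ := intermediate_value_Icc' hac ((hg.mono hsub).sub (hm.mono hsub))
    ⟨sub_nonpos.2 hgm, (sub_pos.2 ha).le⟩
  have hsc : s = sInf S :=
    le_antisymm hs.2 (csInf_le hbdd ⟨hsub hs, sub_nonpos.1 (le_of_eq hs0)⟩)
  refine ⟨sInf S, ⟨hac.lt_of_ne fun h => (h ▸ hgm).not_gt ha, hcb⟩,
    (sub_eq_zero.1 (hsc ▸ hs0)).symm, fun t ht => ?_⟩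
  by_contra! hgt
  exact (csInf_le hbdd ⟨⟨ht.1, ht.2.le.trans hcb⟩, hgt⟩).not_gt ht.2

variable {X : Type*} {W : ℝ → X → ℝ}

lemma ciSup_eq_of_forall_le {f : X → ℝ} {x₀ : X} (h : ∀ x, f x ≤ f x₀) : ⨆ x, f x = f x₀ :=
  haveI : Nonempty X := ⟨x₀⟩
  ciSup_eq_of_forall_le_of_forall_lt_exists_gt h fun _ hw => ⟨x₀, hw⟩

lemma continuousOn_iSup_of_abs_sub_le {s : Set ℝ} {L θ : ℝ}
    (hθ : 0 < θ) (hmax : ∀ t ∈ s, ∃ x, ∀ y, W t y ≤ W t x)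
    (hW : ∀ t ∈ s, ∀ r ∈ s, ∀ x, |W t x - W r x| ≤ L * |t - r| ^ θ) :
    ContinuousOn (fun t => ⨆ x, W t x) s := by
  have hsup : ∀ t ∈ s, ∀ r ∈ s, (⨆ x, W t x) - ⨆ x, W r x ≤ L * |t - r| ^ θ := by
    intro t ht r hr
    obtain ⟨xt, hxt⟩ := hmax t ht
    obtain ⟨xr, hxr⟩ := hmax r hr
    rw [ciSup_eq_of_forall_le hxt, ciSup_eq_of_forall_le hxr]
    linarith [hxr xt, le_of_abs_le (hW t ht r hr xt)]
  intro t ht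
  have hmod : Tendsto (fun r => L * |r - t| ^ θ) (𝓝 t) (𝓝 0) := by
    have : Continuous fun r : ℝ => L * |r - t| ^ θ :=
      ((continuous_id.sub continuous_const).abs.rpow_const fun _ => Or.inr hθ.le).const_mul L
    simpa [zero_rpow hθ.ne'] using this.tendsto t
  rw [ContinuousWithinAt, tendsto_iff_norm_sub_tendsto_zero]
  refine squeeze_zero' (Eventually.of_forall fun _ => norm_nonneg _) ?_
    (hmod.mono_left nhdsWithin_le_nhds)
  filter_upwards [self_mem_nhdsWithin] with r hr
  rw [Real.norm_eq_abs, abs_le]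
  constructor
  · linarith [abs_sub_comm t r ▸ hsup t ht r hr]
  · exact hsup r hr t ht

lemma exists_first_touch {g : ℝ → ℝ} {τ L θ t₁ : ℝ} {x₁ : X} (hθ : 0 < θ)
    (hmax : ∀ t, 0 ≤ t → t < τ → ∃ x, ∀ y, W t y ≤ W t x)
    (hW : ∀ s t x, 0 ≤ s → s < τ → 0 ≤ t → t < τ → |W t x - W s x| ≤ L * |t - s| ^ θ)
    (hg : ContinuousOn g (Ici 0)) (h0 : ∀ x, W 0 x < g 0)
    (ht₁ : 0 ≤ t₁) (ht₁τ : t₁ < τ) (h₁ : g t₁ ≤ W t₁ x₁) :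
    ∃ t₀ ∈ Ioc 0 t₁, ∃ x₀, W t₀ x₀ = g t₀ ∧ (∀ y, W t₀ y ≤ W t₀ x₀) ∧
      ∀ s ∈ Ico 0 t₀, ∀ y, W s y < g s := by
  have hsub : Icc 0 t₁ ⊆ Ico 0 τ := fun s hs => ⟨hs.1, hs.2.trans_lt ht₁τ⟩
  have hm : ContinuousOn (fun t => ⨆ x, W t x) (Ico 0 τ) :=
    continuousOn_iSup_of_abs_sub_le hθ (fun t ht => hmax t ht.1 ht.2)
      fun t ht r hr x => hW r t x hr.1 hr.2 ht.1 ht.2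
  have hle : ∀ t, 0 ≤ t → t < τ → ∀ x, W t x ≤ ⨆ y, W t y := fun t ht htτ x => by
    obtain ⟨xt, hxt⟩ := hmax t ht htτ
    exact ciSup_eq_of_forall_le hxt ▸ hxt x
  obtain ⟨x0, hx0⟩ := hmax 0 le_rfl (ht₁.trans_lt ht₁τ)
  obtain ⟨t₀, ht₀, heq, hbefore⟩ := exists_first_crossing ht₁ (hm.mono hsub)
    (hg.mono Icc_subset_Ici_self) (ciSup_eq_of_forall_le hx0 ▸ h0 x0)
    (h₁.trans (hle t₁ ht₁ ht₁τ x₁))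
  obtain ⟨x₀, hx₀⟩ := hmax t₀ ht₀.1.le (ht₀.2.trans_lt ht₁τ)
  refine ⟨t₀, ht₀, x₀, (ciSup_eq_of_forall_le hx₀).symm.trans heq, hx₀, fun s hs y => ?_⟩
  exact (hle s hs.1 (hs.2.trans_le ht₀.2 |>.trans ht₁τ) y).trans_lt (hbefore s hs)

end FirstTouch

section HeatEquation

variable {d : ℕ} {τ : ℝ}

def HeatEqWithSource (τ : ℝ) (u R : ℝ → Eucl d → ℝ) : Prop :=
  ∀ t x, 0 ≤ t → t < τ → HasDerivAt (fun s => u s x) (lapl (u t) x + R t x) t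

variable {u v Ru Rv : ℝ → Eucl d → ℝ}

lemma HeatEqWithSource.sub (hu : HeatEqWithSource τ u Ru) (hv : HeatEqWithSource τ v Rv)
    (hsm : ∀ t, 0 ≤ t → t < τ → ContDiff ℝ 2 (u t) ∧ ContDiff ℝ 2 (v t)) :
    HeatEqWithSource τ (fun t x => u t x - v t x) (fun t x => Ru t x - Rv t x) :=
  fun t x ht htτ => ((hu t x ht htτ).sub (hv t x ht htτ)).congr_deriv <| by
    rw [lapl_sub (hsm t ht htτ).1 (hsm t ht htτ).2]
    ring

lemma HeatEqWithSource.const_mul_add (hu : HeatEqWithSource τ u Ru)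
    (hv : HeatEqWithSource τ v Rv)
    (hsm : ∀ t, 0 ≤ t → t < τ → ContDiff ℝ 2 (u t) ∧ ContDiff ℝ 2 (v t)) (a b : ℝ) :
    HeatEqWithSource τ (fun t x => a * u t x + b * v t x)
      (fun t x => a * Ru t x + b * Rv t x) := fun t x ht htτ => by
  obtain ⟨hu₂, hv₂⟩ := hsm t ht htτ
  refine (((hu t x ht htτ).const_mul a).add ((hv t x ht htτ).const_mul b)).congr_deriv ?_
  rw [lapl_add (contDiff_const.mul hu₂) (contDiff_const.mul hv₂), lapl_const_mul hu₂,
    lapl_const_mul hv₂]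
  ring

end HeatEquation

section MaximumPrinciple

variable {d : ℕ}

lemma abs_add_abs_sub_add_abs_le (a b c d : ℝ) :
    |(|a| + |b|) - (|c| + |d|)| ≤ |a - c| + |b - d| := by
  rw [add_sub_add_comm]
  exact (abs_add_le _ _).trans
    (add_le_add (abs_abs_sub_abs_le_abs_sub _ _) (abs_abs_sub_abs_le_abs_sub _ _))

lemma sign_mul_le_abs (p q : ℝ) : (SignType.sign p : ℝ) * q ≤ |q| := by
  rcases SignType.sign p with _ | _ | _ <;> simp [le_abs_self, neg_le_abs]

lemma le_of_first_touch {h : ℝ → Eucl d → ℝ} {g : ℝ → ℝ} {t₀ R g₀' : ℝ} {x₀ : Eucl d}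
    (ht₀ : 0 < t₀) (hsm : ContDiff ℝ 2 (h t₀)) (hmax : ∀ y, h t₀ y ≤ h t₀ x₀)
    (htouch : h t₀ x₀ = g t₀) (hbefore : ∀ s ∈ Ico 0 t₀, h s x₀ < g s)
    (hh : HasDerivAt (fun s => h s x₀) (lapl (h t₀) x₀ + R) t₀) (hg : HasDerivAt g g₀' t₀) :
    g₀' ≤ R := by
  have hIcc : IsMaxOn (fun s => h s x₀ - g s) (Icc 0 t₀) t₀ := fun s hs => by
    change h s x₀ - g s ≤ h t₀ x₀ - g t₀
    rcases hs.2.lt_or_eq with hs' | rfl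
    · simpa [htouch] using (hbefore s ⟨hs.1, hs'⟩).le
    · exact le_rfl
  have := hIcc.hasDerivAt_nonneg_of_Icc ht₀ (hh.sub hg)
  linarith [lapl_nonpos_of_forall_le hsm hmax]

theorem abs_add_abs_lt_of_supersolution {θ τ K : ℝ} (hθ : 0 < θ) {u v Ru Rv : ℝ → Eucl d → ℝ}
    {ρ g g' : ℝ → ℝ}
    (hsm : ∀ t, 0 ≤ t → t < τ → ContDiff ℝ 2 (u t) ∧ ContDiff ℝ 2 (v t))
    (hper : ∀ t, 0 ≤ t → t < τ → PeriodicFn (u t) ∧ PeriodicFn (v t))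
    (hu_hol : HolderOn θ τ u) (hv_hol : HolderOn θ τ v) (hinit : ∀ x, u 0 x = 0 ∧ v 0 x = 0)
    (hu : HeatEqWithSource τ u Ru) (hv : HeatEqWithSource τ v Rv)
    (hR : ∀ t x, 0 ≤ t → t < τ → |Ru t x| + |Rv t x| ≤ K * (|u t x| + |v t x|) + ρ t)
    (hg : ∀ t, 0 ≤ t → HasDerivAt g (g' t) t) (hg0 : 0 < g 0)
    (hgK : ∀ t, 0 ≤ t → t < τ → K * g t + ρ t < g' t) :
    ∀ t x, 0 ≤ t → t < τ → |u t x| + |v t x| < g t := by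
  intro t₁ x₁ ht₁ ht₁τ
  by_contra! h₁
  obtain ⟨Lu, hLu⟩ := hu_hol.abs_sub_le_time
  obtain ⟨Lv, hLv⟩ := hv_hol.abs_sub_le_time
  obtain ⟨t₀, ⟨ht₀, ht₀t₁⟩, x₀, htouch, hmax, hbefore⟩ :=
    exists_first_touch (W := fun t x => |u t x| + |v t x|) (L := Lu + Lv) hθ
      (fun t ht htτ => ((hper t ht htτ).1.comp₂ (hper t ht htτ).2 fun p q => |p| + |q|)
        |>.exists_forall_le ((hsm t ht htτ).1.continuous.abs.add (hsm t ht htτ).2.continuous.abs))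
      (fun s t x hs hsτ ht htτ => (abs_add_abs_sub_add_abs_le _ _ _ _).trans <| by
        linarith [hLu s t x hs hsτ ht htτ, hLv s t x hs hsτ ht htτ])
      (fun t ht => (hg t ht).continuousAt.continuousWithinAt)
      (fun x => by simpa [hinit x] using hg0) ht₁ ht₁τ h₁
  have ht₀τ : t₀ < τ := ht₀t₁.trans_lt ht₁τ
  -- `|u| + |v|` is not smooth; the smooth `a u + b v`, with the signs of `u, v` at the touching
  -- point, lies below it and touches it there
  set a : ℝ := ((SignType.sign (u t₀ x₀) : SignType) : ℝ)
  set b : ℝ := ((SignType.sign (v t₀ x₀) : SignType) : ℝ)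
  have hle : ∀ t x, a * u t x + b * v t x ≤ |u t x| + |v t x| := fun t x =>
    add_le_add (sign_mul_le_abs _ _) (sign_mul_le_abs _ _)
  have hval : a * u t₀ x₀ + b * v t₀ x₀ = |u t₀ x₀| + |v t₀ x₀| := by
    simp only [a, b, sign_mul_self]
  obtain ⟨hu₂, hv₂⟩ := hsm t₀ ht₀.le ht₀τ
  have hslope := le_of_first_touch (h := fun t x => a * u t x + b * v t x) ht₀
    ((contDiff_const.mul hu₂).add (contDiff_const.mul hv₂))
    (fun y => (hle t₀ y).trans (hval ▸ hmax y)) (hval.trans htouch)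
    (fun s hs => (hle s x₀).trans_lt (hbefore s hs x₀))
    (hu.const_mul_add hv hsm a b t₀ x₀ ht₀.le ht₀τ) (hg t₀ ht₀.le)
  have hRle : a * Ru t₀ x₀ + b * Rv t₀ x₀ ≤ |Ru t₀ x₀| + |Rv t₀ x₀| :=
    add_le_add (sign_mul_le_abs _ _) (sign_mul_le_abs _ _)
  have := hR t₀ x₀ ht₀.le ht₀τ
  rw [htouch] at this
  linarith [hgK t₀ ht₀.le ht₀τ]

end MaximumPrinciple

section Reaction

noncomputable def kbmFitness (y n z : ℝ) : ℝ := 1 - (1/2) * (z - y) ^ 2 - n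

noncomputable def kbmSourceN (y n z φ : ℝ) : ℝ := (kbmFitness y n z + φ) * n

noncomputable def kbmSourceNZ (A y n z φN φZ : ℝ) : ℝ :=
  (kbmFitness y n z + φN) * (n * z) - A * n * (z - y) + n * φZ

variable {ε M Y y n nb z zb : ℝ}

lemma abs_add_three_le (a b c : ℝ) : |a + b + c| ≤ |a| + |b| + |c| :=
  (abs_add_le _ _).trans (add_le_add_left (abs_add_le _ _) _)

lemma abs_sub_le_of_mul_sub (hε : 0 < ε) (hn : ε ≤ n) (hzb : |zb| ≤ M) :
    |z - zb| ≤ (M + 1) / ε * (|n - nb| + |n * z - nb * zb|) := by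
  have hn0 : 0 < n := hε.trans_le hn
  have hM : 0 ≤ M := (abs_nonneg _).trans hzb
  calc |z - zb| = |(n * z - nb * zb) - zb * (n - nb)| / n := by
        rw [← abs_of_pos hn0, ← abs_div, abs_of_pos hn0]
        congr 1
        field_simp
        ring
    _ ≤ (|n * z - nb * zb| + M * |n - nb|) / ε := by
        gcongr
        refine (abs_sub _ _).trans (add_le_add le_rfl ?_)
        rw [abs_mul]
        gcongr
    _ ≤ (M + 1) / ε * (|n - nb| + |n * z - nb * zb|) := by
        rw [div_mul_eq_mul_div]
        gcongr
        nlinarith [abs_nonneg (n - nb), abs_nonneg (n * z - nb * zb)]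

lemma abs_kbmFitness_le (hy : |y| ≤ Y) (hn : |n| ≤ M) (hz : |z| ≤ M) :
    |kbmFitness y n z| ≤ 1 + (M + Y) ^ 2 / 2 + M := by
  have hzy : (z - y) ^ 2 ≤ (M + Y) ^ 2 := by
    rw [← sq_abs]
    gcongr
    exact (abs_sub _ _).trans (add_le_add hz hy)
  rw [kbmFitness, abs_le]
  constructor <;> nlinarith [abs_le.1 hn, sq_nonneg (z - y)]

lemma abs_kbmFitness_sub_le (hε : 0 < ε) (hn : ε ≤ n) (hy : |y| ≤ Y) (hz : |z| ≤ M)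
    (hzb : |zb| ≤ M) :
    |kbmFitness y n z - kbmFitness y nb zb|
      ≤ ((M + Y) * ((M + 1) / ε) + 1) * (|n - nb| + |n * z - nb * zb|) := by
  have hsum : |z + zb - 2 * y| ≤ 2 * (M + Y) := by
    have := abs_le.1 hz; have := abs_le.1 hzb; have := abs_le.1 hy
    rw [abs_le]; constructor <;> linarith
  have hdiff := abs_sub_le_of_mul_sub (z := z) (nb := nb) hε hn hzb
  have hM : 0 ≤ M := (abs_nonneg _).trans hz
  calc |kbmFitness y n z - kbmFitness y nb zb|
        = |-(1/2) * ((z - zb) * (z + zb - 2 * y)) - (n - nb)| := by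
          rw [kbmFitness, kbmFitness]; congr 1; ring
    _ ≤ (1/2) * (|z - zb| * |z + zb - 2 * y|) + |n - nb| := by
          refine (abs_sub _ _).trans (le_of_eq ?_)
          rw [abs_mul, abs_mul]; norm_num
    _ ≤ (1/2) * (((M + 1) / ε * (|n - nb| + |n * z - nb * zb|)) * (2 * (M + Y)))
          + (|n - nb| + |n * z - nb * zb|) := by
          gcongr
          exact le_add_of_nonneg_right (abs_nonneg _)
    _ = ((M + Y) * ((M + 1) / ε) + 1) * (|n - nb| + |n * z - nb * zb|) := by ring

lemma abs_kbmSourceN_sub_le {B D φ : ℝ} (hcb : |kbmFitness y nb zb| ≤ B)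
    (hc : |kbmFitness y n z - kbmFitness y nb zb| ≤ D) (hn : |n| ≤ M) :
    |kbmSourceN y n z φ - kbmSourceN y nb zb 0| ≤ B * |n - nb| + D * M + M * |φ| := by
  have hD : 0 ≤ D := (abs_nonneg _).trans hc
  set c := kbmFitness y n z
  set cb := kbmFitness y nb zb
  calc |kbmSourceN y n z φ - kbmSourceN y nb zb 0| = |cb * (n - nb) + (c - cb) * n + φ * n| := by
        simp only [kbmSourceN, c, cb]; ring_nf
    _ ≤ |cb| * |n - nb| + |c - cb| * |n| + |φ| * |n| := by
        simpa only [abs_mul] using abs_add_three_le (cb * (n - nb)) ((c - cb) * n) (φ * n)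
    _ ≤ B * |n - nb| + D * M + |φ| * M := by gcongr
    _ = _ := by ring

lemma abs_kbmSourceNZ_sub_le {A B D φN φZ : ℝ} (hcb : |kbmFitness y nb zb| ≤ B)
    (hc : |kbmFitness y n z - kbmFitness y nb zb| ≤ D) (hy : |y| ≤ Y) (hn : |n| ≤ M)
    (hz : |z| ≤ M) :
    |kbmSourceNZ A y n z φN φZ - kbmSourceNZ A y nb zb 0 0|
      ≤ (B + |A|) * |n * z - nb * zb| + |A| * Y * |n - nb| + D * (M * M)
        + M * M * |φN| + M * |φZ| := by
  have hD : 0 ≤ D := (abs_nonneg _).trans hc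
  have hnz : |n * z| ≤ M * M := by rw [abs_mul]; gcongr; exact (abs_nonneg _).trans hn
  set c := kbmFitness y n z
  set cb := kbmFitness y nb zb
  set v := n * z - nb * zb
  set p := n * z
  calc |kbmSourceNZ A y n z φN φZ - kbmSourceNZ A y nb zb 0 0|
        = |(cb * v + (c - cb) * p + φN * p) + (-(A * v) + A * y * (n - nb) + n * φZ)| := by
        simp only [kbmSourceNZ, c, cb, v, p]; ring_nf
    _ ≤ (|cb| * |v| + |c - cb| * |p| + |φN| * |p|)
          + (|A| * |v| + |A| * |y| * |n - nb| + |n| * |φZ|) := by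
        refine (abs_add_le _ _).trans (add_le_add ?_ ?_)
        · simpa only [abs_mul] using abs_add_three_le (cb * v) ((c - cb) * p) (φN * p)
        · simpa only [abs_mul, abs_neg] using
            abs_add_three_le (-(A * v)) (A * y * (n - nb)) (n * φZ)
    _ ≤ (B * |v| + D * (M * M) + |φN| * (M * M))
          + (|A| * |v| + |A| * Y * |n - nb| + M * |φZ|) := by gcongr
    _ = _ := by ring

lemma exists_abs_kbmSource_sub_le (A : ℝ) {ε M Y : ℝ} (hε : 0 < ε) (hM : 0 ≤ M) (hY : 0 ≤ Y) :
    ∃ K, 0 ≤ K ∧ ∀ y n z nb zb φN φZ : ℝ, |y| ≤ Y → ε ≤ n → |n| ≤ M → |z| ≤ M → |nb| ≤ M →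
      |zb| ≤ M →
      |kbmSourceN y n z φN - kbmSourceN y nb zb 0|
        + |kbmSourceNZ A y n z φN φZ - kbmSourceNZ A y nb zb 0 0|
        ≤ K * (|n - nb| + |n * z - nb * zb|) + K * (|φN| + |φZ|) := by
  refine ⟨(1 + (M + Y) ^ 2 / 2 + M) + |A| * (1 + Y) + ((M + Y) * ((M + 1) / ε) + 1) * (M + M * M)
    + (M + M * M), by positivity, ?_⟩
  intro y n z nb zb φN φZ hy hn hnM hz hnb hzb
  have hcb := abs_kbmFitness_le hy hnb hzb
  have hc := abs_kbmFitness_sub_le (nb := nb) (zb := zb) hε hn hy hz hzb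
  have hN := abs_kbmSourceN_sub_le (φ := φN) hcb hc hnM
  have hP := abs_kbmSourceNZ_sub_le (A := A) (φN := φN) (φZ := φZ) hcb hc hy hnM hz
  have hB : 0 ≤ 1 + (M + Y) ^ 2 / 2 + M := by positivity
  have hL : 0 ≤ (M + Y) * ((M + 1) / ε) + 1 := by positivity
  have hu : 0 ≤ |n - nb| := abs_nonneg _
  have hv : 0 ≤ |n * z - nb * zb| := abs_nonneg _
  generalize 1 + (M + Y) ^ 2 / 2 + M = B at hN hP hB ⊢
  generalize (M + Y) * ((M + 1) / ε) + 1 = L at hN hP hL ⊢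
  generalize |n - nb| = u at hN hP hu ⊢
  generalize |n * z - nb * zb| = v at hN hP hv ⊢
  have : 0 ≤ |A| * u + |A| * Y * v + (M + M * M) * (u + v) + M * M * |φZ| := by positivity
  have : 0 ≤ (B + |A| * (1 + Y) + L * (M + M * M)) * (|φN| + |φZ|) := by positivity
  linarith

end Reaction

section KBM

variable {d : ℕ} {τ : ℝ} {A : ℝ} {yopt φN φZ N Z : ℝ → Eucl d → ℝ}

lemma KBMsystem.heatEq_N (h : KBMsystem A yopt φN φZ N Z τ) :
    HeatEqWithSource τ N fun t x => kbmSourceN (yopt t x) (N t x) (Z t x) (φN t x) :=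
  fun t x ht htτ => (h t x ht htτ).1

lemma KBMsystem.heatEq_mul (h : KBMsystem A yopt φN φZ N Z τ)
    (hsm : ∀ t, 0 ≤ t → t < τ → ContDiff ℝ 2 (N t) ∧ ContDiff ℝ 2 (Z t))
    (hpos : ∀ t x, 0 ≤ t → t < τ → N t x ≠ 0) :
    HeatEqWithSource τ (fun t x => N t x * Z t x)
      fun t x => kbmSourceNZ A (yopt t x) (N t x) (Z t x) (φN t x) (φZ t x) :=
  fun t x ht htτ => (((h t x ht htτ).1.mul (h t x ht htτ).2)).congr_deriv <| by
    rw [lapl_mul (hsm t ht htτ).1 (hsm t ht htτ).2]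
    simp only [kbmSourceNZ, kbmFitness]
    field_simp [hpos t x ht htτ]
    ring

end KBM

section Supersolution

noncomputable def supersol (a k c δ t : ℝ) : ℝ := (a * exp (c * t) - k * exp (-(δ * t))) / δ

noncomputable def supersol' (a k c δ t : ℝ) : ℝ :=
  (a * (exp (c * t) * c) - k * (exp (-(δ * t)) * -δ)) / δ

variable {a k c l δ K C₀ : ℝ}

lemma hasDerivAt_supersol (t : ℝ) : HasDerivAt (supersol a k c δ) (supersol' a k c δ t) t := by
  have hE : HasDerivAt (fun s => exp (c * s)) (exp (c * t) * c) t := by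
    simpa using ((hasDerivAt_id t).const_mul c).exp
  have hF : HasDerivAt (fun s => exp (-(δ * s))) (exp (-(δ * t)) * -δ) t := by
    simpa using ((hasDerivAt_id t).const_mul δ).neg.exp
  exact ((hE.const_mul a).sub (hF.const_mul k)).div_const δ

lemma supersol_le (hk : 0 ≤ k) (hδ : 0 < δ) (t : ℝ) : supersol a k c δ t ≤ a / δ * exp (c * t) := by
  rw [supersol, div_mul_eq_mul_div]
  gcongr
  linarith [mul_nonneg hk (exp_pos (-(δ * t))).le]

lemma mul_supersol_add_lt_supersol' (hK : 0 ≤ K) (hlK : K * C₀ < l) (hk : 0 < k)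
    (hkl : k * exp (-1) = l) (hδ : 0 < δ) {t : ℝ} (ht : 0 ≤ t) :
    K * supersol (l + k) k (K + 1) δ t + K * (C₀ / δ + (Icc 0 (1 / δ)).indicator (fun _ => C₀) t)
      < supersol' (l + k) k (K + 1) δ t := by
  have hl : 0 < l := hkl ▸ mul_pos hk (exp_pos _)
  have hE : 1 ≤ exp ((K + 1) * t) := one_le_exp (by positivity)
  -- on `[0, 1/δ]` the decaying mode `k e^{-δt} ≥ k/e = l` absorbs the initial layer
  have hlayer : K * (Icc 0 (1 / δ)).indicator (fun _ => C₀) t ≤ k * exp (-(δ * t)) := by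
    by_cases hmem : t ∈ Icc 0 (1 / δ)
    · rw [indicator_of_mem hmem]
      have hδt : δ * t ≤ 1 := by
        have := hmem.2
        rwa [le_div_iff₀ hδ, mul_comm] at this
      calc K * C₀ ≤ k * exp (-1) := by linarith
        _ ≤ k * exp (-(δ * t)) := by gcongr
    · rw [indicator_of_notMem hmem, mul_zero]
      positivity
  have hgap : K * (C₀ / δ) < (l + k) * exp ((K + 1) * t) / δ := by
    rw [← mul_div_assoc]
    exact div_lt_div_of_pos_right (by nlinarith) hδ
  have hrest : 0 ≤ K * k * exp (-(δ * t)) / δ := by positivity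
  have hdiff : supersol' (l + k) k (K + 1) δ t - K * supersol (l + k) k (K + 1) δ t
      = (l + k) * exp ((K + 1) * t) / δ + K * k * exp (-(δ * t)) / δ + k * exp (-(δ * t)) := by
    simp only [supersol, supersol']
    field_simp
    ring
  rw [mul_add]
  linarith

lemma exists_supersolution (hK : 0 ≤ K) (hC₀ : 0 ≤ C₀) :
    ∃ C > 0, ∀ δ > 0, ∃ g g' : ℝ → ℝ, (∀ t, HasDerivAt g (g' t) t) ∧ 0 < g 0 ∧
      (∀ t, 0 ≤ t → K * g t + K * (C₀ / δ + (Icc 0 (1 / δ)).indicator (fun _ => C₀) t) < g' t) ∧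
      ∀ t, 0 ≤ t → g t ≤ C / δ * exp (C * t) := by
  obtain ⟨l, hlK, hl⟩ : ∃ l, K * C₀ < l ∧ 0 < l := ⟨K * C₀ + 1, by linarith, by positivity⟩
  obtain ⟨k, hkl, hk⟩ : ∃ k, k * exp (-1) = l ∧ 0 < k :=
    ⟨exp 1 * l, by rw [mul_comm, ← mul_assoc, ← exp_add]; simp, by positivity⟩
  refine ⟨l + k + (K + 1), by positivity, fun δ hδ => ⟨supersol (l + k) k (K + 1) δ,
    supersol' (l + k) k (K + 1) δ, hasDerivAt_supersol, by simpa [supersol] using div_pos hl hδ,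
    fun t ht => mul_supersol_add_lt_supersol' hK hlK hk hkl hδ ht, fun t ht => ?_⟩⟩
  refine (supersol_le hk.le hδ t).trans (mul_le_mul ?_ (exp_le_exp.2 ?_) (by positivity) ?_)
  · exact div_le_div_of_nonneg_right (by linarith) hδ.le
  · nlinarith
  · positivity

end Supersolution

structure KBMRegular {d : ℕ} (θ τ M ε : ℝ) (N Z : ℝ → Eucl d → ℝ) : Prop where
  holder_N : HolderOn θ τ N
  holder_Z : HolderOn θ τ Z
  periodic : ∀ t, 0 ≤ t → t < τ → PeriodicFn (N t) ∧ PeriodicFn (Z t)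
  contDiff : ∀ t, 0 ≤ t → t < τ → ContDiff ℝ 2 (N t) ∧ ContDiff ℝ 2 (Z t)
  abs_add_abs_le : ∀ t x, 0 ≤ t → t < τ → |N t x| + |Z t x| ≤ M
  le_N : ∀ t x, 0 ≤ t → t < τ → ε ≤ N t x

namespace KBMRegular

variable {d : ℕ} {θ τ M ε : ℝ} {N Z : ℝ → Eucl d → ℝ}

lemma abs_N_le (h : KBMRegular θ τ M ε N Z) {t : ℝ} (x : Eucl d) (ht : 0 ≤ t) (htτ : t < τ) :
    |N t x| ≤ M :=
  (le_add_of_nonneg_right (abs_nonneg _)).trans (h.abs_add_abs_le t x ht htτ)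

lemma abs_Z_le (h : KBMRegular θ τ M ε N Z) {t : ℝ} (x : Eucl d) (ht : 0 ≤ t) (htτ : t < τ) :
    |Z t x| ≤ M :=
  (le_add_of_nonneg_left (abs_nonneg _)).trans (h.abs_add_abs_le t x ht htτ)

lemma N_ne_zero (h : KBMRegular θ τ M ε N Z) (hε : 0 < ε) {t : ℝ} (x : Eucl d) (ht : 0 ≤ t)
    (htτ : t < τ) : N t x ≠ 0 :=
  (hε.trans_le (h.le_N t x ht htτ)).ne'

lemma contDiff_mul (h : KBMRegular θ τ M ε N Z) {t : ℝ} (ht : 0 ≤ t) (htτ : t < τ) :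
    ContDiff ℝ 2 fun x => N t x * Z t x :=
  (h.contDiff t ht htτ).1.mul (h.contDiff t ht htτ).2

lemma holderOn_mul (h : KBMRegular θ τ M ε N Z) : HolderOn θ τ fun t x => N t x * Z t x :=
  h.holder_N.mul h.holder_Z (fun _ x => h.abs_N_le x) fun _ x => h.abs_Z_le x

lemma periodicFn_mul (h : KBMRegular θ τ M ε N Z) {t : ℝ} (ht : 0 ≤ t) (htτ : t < τ) :
    PeriodicFn fun x => N t x * Z t x :=
  (h.periodic t ht htτ).1.comp₂ (h.periodic t ht htτ).2 (· * ·)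

end KBMRegular

section Comparison

variable {d : ℕ} {θ τ A M ε K : ℝ} {yopt N Z Nb Zb φN φZ ψN ψZ : ℝ → Eucl d → ℝ}
  {ρ g g' : ℝ → ℝ}

theorem KBMsystem.abs_sub_add_abs_mul_sub_lt (h : KBMsystem A yopt φN φZ N Z τ)
    (hb : KBMsystem A yopt ψN ψZ Nb Zb τ) (hr : KBMRegular θ τ M ε N Z)
    (hrb : KBMRegular θ τ M ε Nb Zb) (hθ : 0 < θ) (hε : 0 < ε)
    (hinit : ∀ x, N 0 x = Nb 0 x ∧ Z 0 x = Zb 0 x)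
    (hR : ∀ t x, 0 ≤ t → t < τ →
      |kbmSourceN (yopt t x) (N t x) (Z t x) (φN t x)
          - kbmSourceN (yopt t x) (Nb t x) (Zb t x) (ψN t x)|
        + |kbmSourceNZ A (yopt t x) (N t x) (Z t x) (φN t x) (φZ t x)
          - kbmSourceNZ A (yopt t x) (Nb t x) (Zb t x) (ψN t x) (ψZ t x)|
        ≤ K * (|N t x - Nb t x| + |N t x * Z t x - Nb t x * Zb t x|) + ρ t)
    (hg : ∀ t, 0 ≤ t → HasDerivAt g (g' t) t) (hg0 : 0 < g 0)
    (hgK : ∀ t, 0 ≤ t → t < τ → K * g t + ρ t < g' t) :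
    ∀ t x, 0 ≤ t → t < τ → |N t x - Nb t x| + |N t x * Z t x - Nb t x * Zb t x| < g t :=
  abs_add_abs_lt_of_supersolution hθ
    (fun t ht htτ => ⟨(hr.contDiff t ht htτ).1.sub (hrb.contDiff t ht htτ).1,
      (hr.contDiff_mul ht htτ).sub (hrb.contDiff_mul ht htτ)⟩)
    (fun t ht htτ => ⟨(hr.periodic t ht htτ).1.comp₂ (hrb.periodic t ht htτ).1 (· - ·),
      (hr.periodicFn_mul ht htτ).comp₂ (hrb.periodicFn_mul ht htτ) (· - ·)⟩)
    (hr.holder_N.sub hrb.holder_N) (hr.holderOn_mul.sub hrb.holderOn_mul)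
    (fun x => by simp [hinit x])
    (h.heatEq_N.sub hb.heatEq_N fun t ht htτ =>
      ⟨(hr.contDiff t ht htτ).1, (hrb.contDiff t ht htτ).1⟩)
    ((h.heatEq_mul hr.contDiff fun _ x => hr.N_ne_zero hε x).sub
      (hb.heatEq_mul hrb.contDiff fun _ x => hrb.N_ne_zero hε x)
      fun t ht htτ => ⟨hr.contDiff_mul ht htτ, hrb.contDiff_mul ht htτ⟩)
    hR hg hg0 hgK

end Comparison

theorem kbm_stability_general (d : ℕ) (A : ℝ)
    (θ : ℝ) (hθ : θ ∈ Set.Ioo (0:ℝ) 1) (τ : ℝ) (hτ : 0 < τ)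
    (yopt : ℝ → Eucl d → ℝ)
    (hyopt : ∃ M : ℝ, ∀ (t : ℝ) (x : Eucl d), 0 ≤ t →
      |yopt t x| + ‖fderiv ℝ (fun p : ℝ × Eucl d => yopt p.1 p.2) (t, x)‖ ≤ M)
    (Nb Zb : ℝ → Eucl d → ℝ) (N0 Z0 : Eucl d → ℝ) (C₀ M ε : ℝ)
    (hC₀ : 0 < C₀) (hε : 0 < ε)
    (hHb : HolderOn θ τ Nb ∧ HolderOn θ τ Zb)
    (hperb : ∀ t : ℝ, PeriodicFn (Nb t) ∧ PeriodicFn (Zb t))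
    (hsmb : ∀ t : ℝ, 0 ≤ t → t < τ → ContDiff ℝ 2 (Nb t) ∧ ContDiff ℝ 2 (Zb t))
    (heqb : KBMsystem A yopt (fun _ _ => 0) (fun _ _ => 0) Nb Zb τ)
    (hinitb : ∀ x, Nb 0 x = N0 x ∧ Zb 0 x = Z0 x)
    (hbddb : ∀ (t : ℝ) (x : Eucl d), 0 ≤ t → t < τ → |Nb t x| + |Zb t x| ≤ M)
    (hlowb : ∀ (t : ℝ) (x : Eucl d), 0 ≤ t → t < τ → ε ≤ Nb t x) :
    ∃ C > (0:ℝ), ∀ γ > (0:ℝ), ∀ N Z φN φZ : ℝ → Eucl d → ℝ,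
      (HolderOn θ τ N ∧ HolderOn θ τ Z) →
      (∀ t : ℝ, PeriodicFn (N t) ∧ PeriodicFn (Z t)) →
      (∀ t : ℝ, 0 ≤ t → t < τ → ContDiff ℝ 2 (N t) ∧ ContDiff ℝ 2 (Z t)) →
      KBMsystem A yopt φN φZ N Z τ →
      (∀ x, N 0 x = N0 x ∧ Z 0 x = Z0 x) →
      (∀ (t : ℝ) (x : Eucl d), 0 ≤ t → t < τ → |N t x| + |Z t x| ≤ M) →
      (∀ (t : ℝ) (x : Eucl d), 0 ≤ t → t < τ → ε ≤ N t x) →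
      (∀ (t : ℝ) (x : Eucl d), 0 ≤ t → t < τ →
        |φN t x| + |φZ t x|
          ≤ C₀ / γ ^ θ + (Set.Icc (0:ℝ) (1 / γ ^ θ)).indicator (fun _ => C₀) t) →
      ∀ (t : ℝ) (x : Eucl d), 0 ≤ t → t < τ →
        |N t x - Nb t x| + |N t x * Z t x - Nb t x * Zb t x|
          ≤ (C / γ ^ θ) * Real.exp (C * t) := by
  obtain ⟨Y, hY⟩ := hyopt
  have hyY : ∀ t x, 0 ≤ t → |yopt t x| ≤ Y := fun t x ht =>
    (le_add_of_nonneg_right (norm_nonneg _)).trans (hY t x ht)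
  have hM : 0 ≤ M := (add_nonneg (abs_nonneg _) (abs_nonneg _)).trans (hbddb 0 0 le_rfl hτ)
  obtain ⟨K, hK, hsource⟩ :=
    exists_abs_kbmSource_sub_le A hε hM ((abs_nonneg _).trans (hyY 0 0 le_rfl))
  obtain ⟨C, hC, hsuper⟩ := exists_supersolution hK hC₀.le
  refine ⟨C, hC, fun γ hγ N Z φN φZ hH hper hsm heq hinit hbdd hlow hφ t x ht htτ => ?_⟩
  obtain ⟨g, g', hg, hg0, hgK, hgC⟩ := hsuper (γ ^ θ) (rpow_pos_of_pos hγ θ)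
  have hr : KBMRegular θ τ M ε N Z := ⟨hH.1, hH.2, fun t _ _ => hper t, hsm, hbdd, hlow⟩
  have hrb : KBMRegular θ τ M ε Nb Zb := ⟨hHb.1, hHb.2, fun t _ _ => hperb t, hsmb, hbddb, hlowb⟩
  refine (heq.abs_sub_add_abs_mul_sub_lt heqb hr hrb hθ.1 hε
    (fun x => ⟨(hinit x).1.trans (hinitb x).1.symm, (hinit x).2.trans (hinitb x).2.symm⟩)
    (fun t x ht htτ => (hsource _ _ _ _ _ _ _ (hyY t x ht) (hlow t x ht htτ) (hr.abs_N_le x ht htτ)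
      (hr.abs_Z_le x ht htτ) (hrb.abs_N_le x ht htτ) (hrb.abs_Z_le x ht htτ)).trans
        (add_le_add le_rfl (mul_le_mul_of_nonneg_left (hφ t x ht htτ) hK)))
    (fun t _ => hg t) hg0 (fun t ht _ => hgK t ht) t x ht htτ).le.trans (hgC t ht)

/-- Stability of the KBM under the perturbations of Theorem 2.1 (Section 5.4 of the paper):
if `(N,Z)` solves the KBM system perturbed by `(φ_N, φ_Z)` with
`‖φ_N(t,·)‖_∞ + ‖φ_Z(t,·)‖_∞ ≤ C₀/γ^θ + C₀ 1_{[0,1/γ^θ]}(t)` and `(N̄,Z̄)` solves the KBM,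
with common initial data `(N⁰,Z⁰) ∈ W^{2,∞}`, `min N⁰ > 0`, all solutions bounded by `M` and
bounded below by `ε > 0`, then there is `C > 0` independent of `γ` with
`‖(N-N̄)(t,·)‖_∞ + ‖(NZ-N̄Z̄)(t,·)‖_∞ ≤ (C/γ^θ) e^{Ct}`; in particular `(N,Z) → (N̄,Z̄)`
as `γ → ∞`. -/
theorem kbm_stability (d : ℕ) (hd : 1 ≤ d) (A : ℝ) (hA : 0 < A)
    (θ : ℝ) (hθ : θ ∈ Set.Ioo (0:ℝ) 1) (τ : ℝ) (hτ : 0 < τ)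
    (yopt : ℝ → Eucl d → ℝ)
    (hyopt : ∃ M : ℝ, ∀ (t : ℝ) (x : Eucl d), 0 ≤ t →
      |yopt t x| + ‖fderiv ℝ (fun p : ℝ × Eucl d => yopt p.1 p.2) (t, x)‖ ≤ M)
    (hyper : ∀ t : ℝ, PeriodicFn (yopt t))
    (Nb Zb : ℝ → Eucl d → ℝ) (N0 Z0 : Eucl d → ℝ) (C₀ M ε : ℝ)
    (hC₀ : 0 < C₀) (hε : 0 < ε)
    (hN0W2 : BddW2inf N0) (hZ0W2 : BddW2inf Z0) (hN0pos : ∀ x, ε ≤ N0 x)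
    (hHb : HolderOn θ τ Nb ∧ HolderOn θ τ Zb)
    (hperb : ∀ t : ℝ, PeriodicFn (Nb t) ∧ PeriodicFn (Zb t))
    (hsmb : ∀ t : ℝ, 0 ≤ t → t < τ → ContDiff ℝ 2 (Nb t) ∧ ContDiff ℝ 2 (Zb t))
    (heqb : KBMsystem A yopt (fun _ _ => 0) (fun _ _ => 0) Nb Zb τ)
    (hinitb : ∀ x, Nb 0 x = N0 x ∧ Zb 0 x = Z0 x)
    (hbddb : ∀ (t : ℝ) (x : Eucl d), 0 ≤ t → t < τ → |Nb t x| + |Zb t x| ≤ M)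
    (hlowb : ∀ (t : ℝ) (x : Eucl d), 0 ≤ t → t < τ → ε ≤ Nb t x) :
    ∃ C > (0:ℝ), ∀ γ > (0:ℝ), ∀ N Z φN φZ : ℝ → Eucl d → ℝ,
      (HolderOn θ τ N ∧ HolderOn θ τ Z) →
      (∀ t : ℝ, PeriodicFn (N t) ∧ PeriodicFn (Z t)) →
      (∀ t : ℝ, 0 ≤ t → t < τ → ContDiff ℝ 2 (N t) ∧ ContDiff ℝ 2 (Z t)) →
      KBMsystem A yopt φN φZ N Z τ →
      (∀ x, N 0 x = N0 x ∧ Z 0 x = Z0 x) →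
      (∀ (t : ℝ) (x : Eucl d), 0 ≤ t → t < τ → |N t x| + |Z t x| ≤ M) →
      (∀ (t : ℝ) (x : Eucl d), 0 ≤ t → t < τ → ε ≤ N t x) →
      (∀ (t : ℝ) (x : Eucl d), 0 ≤ t → t < τ →
        |φN t x| + |φZ t x|
          ≤ C₀ / γ ^ θ + (Set.Icc (0:ℝ) (1 / γ ^ θ)).indicator (fun _ => C₀) t) →
      ∀ (t : ℝ) (x : Eucl d), 0 ≤ t → t < τ →
        |N t x - Nb t x| + |N t x * Z t x - Nb t x * Zb t x|
          ≤ (C / γ ^ θ) * Real.exp (C * t) :=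
  kbm_stability_general d A θ hθ τ hτ yopt hyopt Nb Zb N0 Z0 C₀ M ε hC₀ hε hHb hperb hsmb heqb
    hinitb hbddb hlowb
end
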